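/- arXiv:math/9811143 — 4 statements merged into one kernel-verified Lean document; each statement's English description precedes it below -/
import Mathlib

section
/- For every real number j₁ ≥ 0, the reduced matrix element of the q-boson q-spinor operator, ⟨j₁+½‖T^{½}‖j₁⟩ = −√([2j₁+1]_q·[2j₁+2]_q), satisfies q^{2j₁+1/2}·√([2j₁+1]_q·[2j₁+2]_q) → 1 as q → 0⁺; that is, it diverges as −q^{−2(j₁+1/4)}, so that after rescaling by Γ = √q·Γ₀ (which multiplies it by q^{2j₁+1/2}) the crystal reduced matrix element ⟨j₁+½‖τ^{½}‖j₁⟩ equals −1. -/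
open Filter Topology

/-- The q-number [x]_q = (q^x - q^{-x})/(q - q⁻¹), using real powers. -/
noncomputable def qnum (q x : ℝ) : ℝ := (q ^ x - q ^ (-x)) / (q - q⁻¹)

private lemma qnum_eq_aux {q : ℝ} (hq0 : 0 < q) (hq1 : q < 1) (x : ℝ) :
    (q ^ x - q ^ (-x)) / (q - q⁻¹)
      = q ^ (1 - x) * ((1 - q ^ (2 * x)) / (1 - q ^ (2 : ℝ))) := by
  have hnum : q ^ x - q ^ (-x) = q ^ (-x) * (q ^ (2 * x) - 1) := by
    rw [mul_sub, ← Real.rpow_add hq0, mul_one]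
    ring_nf
  have hden : q - q⁻¹ = q ^ (-1 : ℝ) * (q ^ (2 : ℝ) - 1) := by
    rw [mul_sub, ← Real.rpow_add hq0, mul_one, Real.rpow_neg_one]
    norm_num
  have h2 : q ^ (2 : ℝ) - 1 ≠ 0 := by
    have : q ^ (2 : ℝ) < 1 := by
      calc q ^ (2 : ℝ) = q ^ (2 : ℕ) := Real.rpow_natCast q 2
        _ < 1 := by nlinarith
    linarith
  have h2' : (1 : ℝ) - q ^ (2 : ℝ) ≠ 0 := fun h => h2 (by linarith [sub_eq_zero.mp h])
  have hpne : q ^ (-1 : ℝ) ≠ 0 := ne_of_gt (Real.rpow_pos_of_pos hq0 _)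
  have key : q ^ (1 - x) = q ^ (-x) / q ^ (-1 : ℝ) := by
    rw [← Real.rpow_sub hq0]; ring_nf
  rw [hnum, hden, key, div_mul_div_comm]
  rw [div_eq_div_iff (mul_ne_zero hpne h2) (mul_ne_zero hpne h2')]
  ring

/-- For every real `j₁ ≥ 0`, the reduced matrix element of the q-boson q-spinor operator,
`⟨j₁+½‖T^½‖j₁⟩ = -√([2j₁+1]_q·[2j₁+2]_q)`, satisfies
`q^(2j₁+1/2) · √([2j₁+1]_q·[2j₁+2]_q) → 1` as `q → 0⁺`; after the rescaling by
`Γ = √q·Γ₀` the crystal reduced matrix element equals -1, i.e.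
`q^(2j₁+1/2) · (-√([2j₁+1]_q·[2j₁+2]_q)) → -1`. -/
theorem qSpinor_reduced_matrix_element_crystal_limit (j₁ : ℝ) (hj : 0 ≤ j₁) :
    Tendsto
      (fun q : ℝ => q ^ (2 * j₁ + 1/2) *
        Real.sqrt (qnum q (2 * j₁ + 1) * qnum q (2 * j₁ + 2)))
      (𝓝[>] (0 : ℝ)) (𝓝 1) ∧
    Tendsto
      (fun q : ℝ => q ^ (2 * j₁ + 1/2) *
        (-Real.sqrt (qnum q (2 * j₁ + 1) * qnum q (2 * j₁ + 2))))
      (𝓝[>] (0 : ℝ)) (𝓝 (-1)) := by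
  set a : ℝ := 2 * j₁ + 1 with ha
  set b : ℝ := 2 * j₁ + 2 with hb
  -- the simplified form
  set G : ℝ → ℝ := fun q =>
    Real.sqrt ((1 - q ^ (2 * a)) * (1 - q ^ (2 * b)) / (1 - q ^ (2 : ℝ)) ^ 2) with hG
  have heq : ∀ q ∈ Set.Ioo (0 : ℝ) 1,
      q ^ (2 * j₁ + 1/2) * Real.sqrt (qnum q a * qnum q b) = G q := by
    intro q hq
    obtain ⟨hq0, hq1⟩ := hq
    have hq0' : (0 : ℝ) ≤ q := le_of_lt hq0
    have h1 : q ^ (2 * j₁ + 1/2) = Real.sqrt (q ^ (4 * j₁ + 1)) := by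
      rw [Real.sqrt_eq_rpow, ← Real.rpow_mul hq0']
      congr 1
      ring
    rw [h1, ← Real.sqrt_mul (Real.rpow_nonneg hq0' _)]
    unfold qnum
    rw [qnum_eq_aux hq0 hq1 a, qnum_eq_aux hq0 hq1 b]
    congr 1
    have hcomb : q ^ (4 * j₁ + 1) * (q ^ (1 - a) * (q ^ (1 - b))) = 1 := by
      rw [← Real.rpow_add hq0, ← Real.rpow_add hq0]
      have : 4 * j₁ + 1 + (1 - a + (1 - b)) = 0 := by rw [ha, hb]; ring
      rw [this, Real.rpow_zero]
    calc q ^ (4 * j₁ + 1) *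
          (q ^ (1 - a) * ((1 - q ^ (2 * a)) / (1 - q ^ (2:ℝ))) *
            (q ^ (1 - b) * ((1 - q ^ (2 * b)) / (1 - q ^ (2:ℝ)))))
        = (q ^ (4 * j₁ + 1) * (q ^ (1 - a) * (q ^ (1 - b)))) *
          ((1 - q ^ (2 * a)) / (1 - q ^ (2:ℝ)) * ((1 - q ^ (2 * b)) / (1 - q ^ (2:ℝ)))) := by
          ring
      _ = (1 - q ^ (2 * a)) * (1 - q ^ (2 * b)) / (1 - q ^ (2:ℝ)) ^ 2 := by
          rw [hcomb, one_mul, div_mul_div_comm, ← pow_two]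
  -- the limit of G
  have hrpow : ∀ c : ℝ, 0 < c →
      Tendsto (fun q : ℝ => q ^ c) (𝓝[>] (0 : ℝ)) (𝓝 0) := by
    intro c hc
    have := (Real.continuousAt_rpow_const 0 c (Or.inr hc.le)).tendsto
    rw [Real.zero_rpow hc.ne'] at this
    exact this.mono_left nhdsWithin_le_nhds
  have ha' : (0:ℝ) < 2 * a := by rw [ha]; linarith
  have hb' : (0:ℝ) < 2 * b := by rw [hb]; linarith
  have hGlim : Tendsto G (𝓝[>] (0 : ℝ)) (𝓝 1) := by
    have hinner : Tendsto
        (fun q : ℝ => (1 - q ^ (2 * a)) * (1 - q ^ (2 * b)) / (1 - q ^ (2 : ℝ)) ^ 2)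
        (𝓝[>] (0 : ℝ)) (𝓝 1) := by
      have hnum : Tendsto (fun q : ℝ => (1 - q ^ (2 * a)) * (1 - q ^ (2 * b)))
          (𝓝[>] (0 : ℝ)) (𝓝 1) := by
        have h := ((tendsto_const_nhds (x := (1:ℝ))).sub (hrpow _ ha')).mul
          ((tendsto_const_nhds (x := (1:ℝ))).sub (hrpow _ hb'))
        norm_num at h
        exact h
      have hden : Tendsto (fun q : ℝ => (1 - q ^ (2 : ℝ)) ^ 2)
          (𝓝[>] (0 : ℝ)) (𝓝 1) := by
        have h := ((tendsto_const_nhds (x := (1:ℝ))).sub (hrpow 2 two_pos)).pow 2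
        norm_num only at h
        exact h
      have h := hnum.div hden one_ne_zero
      rw [div_one] at h
      exact h
    have := (Real.continuous_sqrt.continuousAt (x := (1:ℝ))).tendsto.comp hinner
    rwa [Real.sqrt_one] at this
  have hmem : Set.Ioo (0:ℝ) 1 ∈ 𝓝[>] (0:ℝ) :=
    Ioo_mem_nhdsGT_of_mem (by norm_num)
  have hfirst : Tendsto
      (fun q : ℝ => q ^ (2 * j₁ + 1/2) * Real.sqrt (qnum q a * qnum q b))
      (𝓝[>] (0 : ℝ)) (𝓝 1) := by
    refine hGlim.congr' ?_
    filter_upwards [hmem] with q hq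
    exact (heq q hq).symm
  refine ⟨hfirst, ?_⟩
  have := hfirst.neg
  convert this using 2 with q
  ring
end

section
/- Characterization of highest-weight elements in the crystal tensor product: for natural numbers a, b and a pair (k, l) with k ≤ a and l ≤ b, one has ẽ(k, l) = none if and only if k = 0 and l ≤ a. (In spin language: u ⊗ v ∈ B(j₁) ⊗ B(j₂) is annihilated by the raising operator iff u is the highest-weight vector of B(j₁) and ε(v) = j₂ − m₂ ≤ 2j₁.) -/
/-- Kashiwara's lowering operator `f̃` on the crystal tensor product `B_a ⊗ B_b`,
modeled on pairs `(k, l)` of lowering-step counters (`k ≤ a`, `l ≤ b`):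
`f̃(k,l) = (k+1, l)` if `a - k > l`; `f̃(k,l) = (k, l+1)` if `a - k ≤ l` and `l < b`;
`f̃(k,l) = none` otherwise. -/
def ftil (a b : ℕ) (p : ℕ × ℕ) : Option (ℕ × ℕ) :=
  if p.2 < a - p.1 then some (p.1 + 1, p.2)
  else if p.2 < b then some (p.1, p.2 + 1)
  else none

/-- Kashiwara's raising operator `ẽ` on the crystal tensor product `B_a ⊗ B_b`:
`ẽ(k,l) = (k-1, l)` if `a - k ≥ l` and `k > 0`; `ẽ(k,l) = (k, l-1)` if `a - k < l`;
`ẽ(k,l) = none` otherwise. -/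
def etil (a b : ℕ) (p : ℕ × ℕ) : Option (ℕ × ℕ) :=
  if p.2 ≤ a - p.1 ∧ 0 < p.1 then some (p.1 - 1, p.2)
  else if a - p.1 < p.2 then some (p.1, p.2 - 1)
  else none

/-- `n`-fold application of a partially defined crystal operator, propagating `none`. -/
def iterOpt (f : ℕ × ℕ → Option (ℕ × ℕ)) (n : ℕ) (p : ℕ × ℕ) : Option (ℕ × ℕ) :=
  (fun o => o.bind f)^[n] (some p)

theorem etil_eq_none_iff_general (a b k l : ℕ) :
    etil a b (k, l) = none ↔ k = 0 ∧ l ≤ a := by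
  unfold etil
  split_ifs <;> simp only [false_iff, true_iff, not_and, not_le] <;> omega

/-- Characterization of highest-weight elements in the crystal tensor product:
for `k ≤ a` and `l ≤ b`, `ẽ(k, l) = none` iff `k = 0` and `l ≤ a`. -/
theorem etil_eq_none_iff (a b k l : ℕ) (hk : k ≤ a) (hl : l ≤ b) :
    etil a b (k, l) = none ↔ k = 0 ∧ l ≤ a :=
  etil_eq_none_iff_general a b k l
end

section
/- Length of the connected components of the crystal tensor product: for natural numbers a, b and every l₀ ≤ min(a, b), the iterate f̃ⁿ(0, l₀) is defined (i.e. not none) if and only if n ≤ a + b − 2l₀. Hence the connected component headed by the highest-weight element (0, l₀) is a chain with exactly a + b − 2l₀ + 1 elements, matching the dimension 2J + 1 of the irreducible crystal with 2J = a + b − 2l₀. -/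
lemma iterOpt_succ (f : ℕ × ℕ → Option (ℕ × ℕ)) (n : ℕ) (p : ℕ × ℕ) :
    iterOpt f (n+1) p = (iterOpt f n p).bind f := by
  simp [iterOpt, Function.iterate_succ_apply']

lemma iter_formula (a b l₀ : ℕ) (ha : l₀ ≤ a) (hb : l₀ ≤ b) (n : ℕ) :
    iterOpt (ftil a b) n (0, l₀) =
      if n ≤ a - l₀ then some (n, l₀)
      else if n ≤ a + b - 2 * l₀ then some (a - l₀, n - (a - l₀) + l₀)
      else none := by
  induction n with
  | zero => simp [iterOpt]
  | succ n ih =>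
    rw [iterOpt_succ, ih]
    rcases le_or_gt n (a - l₀) with h1 | h1
    · rw [if_pos h1]
      simp only [Option.bind_some, ftil]
      split_ifs <;> first | rfl | (simp only [Option.some.injEq, Prod.mk.injEq, true_and, and_true]; omega) | (exfalso; omega)
    · rw [if_neg (not_le.2 h1)]
      rcases le_or_gt n (a + b - 2 * l₀) with h2 | h2
      · rw [if_pos h2]
        simp only [Option.bind_some, ftil]
        split_ifs <;> first | rfl | (simp only [Option.some.injEq, Prod.mk.injEq, true_and, and_true]; omega) | (exfalso; omega)
      · rw [if_neg (not_le.2 h2)]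
        simp only [Option.bind_none]
        split_ifs <;> first | rfl | omega

/-- Length of the connected components of the crystal tensor product: for
`l₀ ≤ min a b`, the iterate `f̃ⁿ(0, l₀)` is defined iff `n ≤ a + b - 2·l₀`; hence the
connected component headed by `(0, l₀)` is a chain with exactly `a + b - 2·l₀ + 1`
elements. -/
theorem crystal_component_length (a b l₀ : ℕ) (h : l₀ ≤ min a b) :
    (∀ n : ℕ, (iterOpt (ftil a b) n (0, l₀)).isSome ↔ n ≤ a + b - 2 * l₀) ∧
    {p : ℕ × ℕ | ∃ n : ℕ, iterOpt (ftil a b) n (0, l₀) = some p}.ncard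
      = a + b - 2 * l₀ + 1 := by
  have ha : l₀ ≤ a := le_trans h (min_le_left a b)
  have hb : l₀ ≤ b := le_trans h (min_le_right a b)
  set g : ℕ → ℕ × ℕ := fun n =>
    if n ≤ a - l₀ then (n, l₀) else (a - l₀, n - (a - l₀) + l₀) with hg
  have key : ∀ n, iterOpt (ftil a b) n (0, l₀) =
      if n ≤ a + b - 2 * l₀ then some (g n) else none := by
    intro n
    rw [iter_formula a b l₀ ha hb n]
    rcases le_or_gt n (a - l₀) with h1 | h1
    · rw [if_pos h1, if_pos (by omega)]
      simp [hg, h1]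
    · rw [if_neg (not_le.2 h1)]
      rcases le_or_gt n (a + b - 2 * l₀) with h2 | h2
      · rw [if_pos h2, if_pos h2]
        simp [hg, if_neg (not_le.2 h1)]
      · rw [if_neg (not_le.2 h2), if_neg (not_le.2 h2)]
  constructor
  · intro n
    rw [key]
    split_ifs with h1 <;> simp [h1]
  · have hset : {p : ℕ × ℕ | ∃ n : ℕ, iterOpt (ftil a b) n (0, l₀) = some p}
        = ↑((Finset.range (a + b - 2 * l₀ + 1)).image g) := by
      ext p
      simp only [Set.mem_setOf_eq, Finset.coe_image, Set.mem_image, Finset.mem_coe,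
        Finset.mem_range]
      constructor
      · rintro ⟨n, hn⟩
        rw [key] at hn
        split_ifs at hn with h1
        · exact ⟨n, by omega, by injection hn⟩
      · rintro ⟨n, hn, rfl⟩
        exact ⟨n, by rw [key, if_pos (by omega)]⟩
    rw [hset, Set.ncard_coe_finset]
    rw [Finset.card_image_of_injOn, Finset.card_range]
    have hsum : ∀ x, (g x).1 + (g x).2 = x + l₀ := by
      intro x
      simp only [hg]
      split_ifs with hx
      · simp
      · simp; omega
    intro x _ y _ hxy
    have h1 := hsum x
    have h2 := hsum y
    rw [hxy] at h1
    omega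
end

section
/- Selection rule for the lowest-weight state: for natural numbers a, b with b ≥ a (i.e. j₁ ≥ j) and every k ≤ a, one has f̃^{2k + b − a}(0, a − k) = some (k, b); hence the lowest-weight vector of the second factor paired with the component k of the first factor lies in the connected component with 2J = a + b − 2(a − k) = b − a + 2k. (In spin language: the crystal tensor operator component τ^j_m applied to the lowest-weight state |j₁, −j₁⟩ with j₁ ≥ j produces a state of the single irreducible representation J = j₁ − m, one for each m = −j, …, j.) -/
/-! The tensor product rule lowers the first factor of `(k', l)` while `l < a - k'`, so starting
from `(0, a - k)` it reaches `(k, a - k)` in `k` steps; from then on it lowers the second factor,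
reaching `(k, b)` after `b - (a - k)` further steps. Since `a ≤ b`, the total `k + (b - (a - k))`
is `2k + b - a`. -/

section IterOpt

variable (f : ℕ × ℕ → Option (ℕ × ℕ))

lemma iterOpt_succ_of_eq_some {p q : ℕ × ℕ} (h : f p = some q) (n : ℕ) :
    iterOpt f (n + 1) p = iterOpt f n q := by
  simp [iterOpt, Function.iterate_succ_apply, h]

lemma iterOpt_add_of_eq_some {n : ℕ} {p q : ℕ × ℕ} (h : iterOpt f n p = some q) (m : ℕ) :
    iterOpt f (m + n) p = iterOpt f m q := by
  rw [iterOpt, Function.iterate_add_apply]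
  exact congrArg _ h

end IterOpt

section Ftil

variable {a b : ℕ}

lemma ftil_of_lt_sub {k l : ℕ} (h : l < a - k) : ftil a b (k, l) = some (k + 1, l) :=
  if_pos h

lemma ftil_of_sub_le_of_lt {k l : ℕ} (h₁ : a - k ≤ l) (h₂ : l < b) :
    ftil a b (k, l) = some (k, l + 1) := by
  rw [ftil, if_neg (Nat.not_lt.mpr h₁), if_pos h₂]

lemma iterOpt_ftil_of_add_le {k l : ℕ} (i : ℕ) (h : k + i + l ≤ a) :
    iterOpt (ftil a b) i (k, l) = some (k + i, l) := by
  induction i generalizing k with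
  | zero => rfl
  | succ i ih =>
    rw [iterOpt_succ_of_eq_some _ (ftil_of_lt_sub (by omega)), ih (by omega), Nat.add_right_comm,
      Nat.add_assoc]

lemma iterOpt_ftil_of_sub_le {k l : ℕ} (i : ℕ) (h₁ : a - k ≤ l) (h₂ : l + i ≤ b) :
    iterOpt (ftil a b) i (k, l) = some (k, l + i) := by
  induction i generalizing l with
  | zero => rfl
  | succ i ih =>
    rw [iterOpt_succ_of_eq_some _ (ftil_of_sub_le_of_lt h₁ (by omega)), ih (by omega) (by omega),
      Nat.add_right_comm, Nat.add_assoc]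

end Ftil

/-- Selection rule for the lowest-weight state: for `b ≥ a` and every `k ≤ a`,
`f̃^(2k + b - a)(0, a - k) = some (k, b)`; the lowest-weight vector of the second factor
paired with component `k` of the first lies in the component with `2J = b - a + 2k`. -/
theorem crystal_lowest_weight_selection_rule (a b : ℕ) (hab : a ≤ b) (k : ℕ) (hk : k ≤ a) :
    iterOpt (ftil a b) (2 * k + b - a) (0, a - k) = some (k, b) := by
  have lower_first : iterOpt (ftil a b) k (0, a - k) = some (k, a - k) := by
    simpa using iterOpt_ftil_of_add_le k (by omega : 0 + k + (a - k) ≤ a)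
  have lower_second : iterOpt (ftil a b) (b - (a - k)) (k, a - k) = some (k, b) := by
    simpa [show a - k + (b - (a - k)) = b by omega] using
      iterOpt_ftil_of_sub_le (b - (a - k)) le_rfl (by omega : a - k + (b - (a - k)) ≤ b)
  rw [show 2 * k + b - a = b - (a - k) + k by omega, iterOpt_add_of_eq_some _ lower_first]
  exact lower_second
end
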